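/- The function C((a₁,c₁),(a₂,c₂)) := ⟨a₁, c₁·a₂⟩_H is a normalized 2-cocycle on the affine group Aff₁(ℝ) with values in ℝ (where (a,c) acts on ℝ by u ↦ c·u): for all real a₁, a₂, a₃ and all nonzero real c₁, c₂, one has c₁·⟨a₂, c₂·a₃⟩_H = ⟨a₁, c₁·a₂⟩_H + ⟨a₁ + c₁·a₂, (c₁·c₂)·a₃⟩_H − ⟨a₁, c₁·(a₂ + c₂·a₃)⟩_H, and moreover ⟨a, c·0⟩_H = 0 and ⟨0, 1·a⟩_H = 0 for all a and nonzero c (normalization). -/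

import Mathlib

/-- Extended binary entropy `H(p) = -p log p - (1-p) log (1-p)`. -/
noncomputable def binEntropy (p : ℝ) : ℝ :=
  Real.negMulLog p + Real.negMulLog (1 - p)

/-- The Cathelineau–Kontsevich symbol `⟨a,b⟩_H = (a+b) · H(a/(a+b))`. -/
noncomputable def symbolH (a b : ℝ) : ℝ :=
  (a + b) * binEntropy (a / (a + b))

lemma symbolH_eq (a b : ℝ) :
    symbolH a b = Real.negMulLog a + Real.negMulLog b - Real.negMulLog (a + b) := by
  by_cases hs : a + b = 0
  · have hb : b = -a := by linarith
    subst hb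
    simp [symbolH, hs, Real.negMulLog, Real.log_neg_eq_log]
  · have ha' : a / (a + b) = a * (a + b)⁻¹ := div_eq_mul_inv _ _
    have hb' : 1 - a * (a + b)⁻¹ = b * (a + b)⁻¹ := by
      field_simp
      ring
    rw [symbolH, binEntropy, ha', hb', Real.negMulLog_mul, Real.negMulLog_mul]
    have hinv : Real.negMulLog (a + b)⁻¹ = (a + b)⁻¹ * Real.log (a + b) := by
      simp [Real.negMulLog, Real.log_inv]
    have h2 : Real.negMulLog (a + b) = -(a + b) * Real.log (a + b) := rfl
    rw [hinv, h2]
    field_simp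
    ring

/-- `C((a₁,c₁),(a₂,c₂)) := ⟨a₁, c₁·a₂⟩_H` is a normalized 2-cocycle on `Aff₁(ℝ)`
with values in `ℝ`, where `(a,c)` acts on `ℝ` by `u ↦ c·u`. -/
theorem symbolH_affine_two_cocycle :
    (∀ (a₁ a₂ a₃ c₁ c₂ : ℝ), c₁ ≠ 0 → c₂ ≠ 0 →
      c₁ * symbolH a₂ (c₂ * a₃) =
        symbolH a₁ (c₁ * a₂) + symbolH (a₁ + c₁ * a₂) ((c₁ * c₂) * a₃)
          - symbolH a₁ (c₁ * (a₂ + c₂ * a₃))) ∧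
    (∀ (a c : ℝ), c ≠ 0 → symbolH a (c * 0) = 0) ∧
    (∀ a : ℝ, symbolH 0 (1 * a) = 0) := by
  refine ⟨fun a₁ a₂ a₃ c₁ c₂ _ _ => ?_, fun a c _ => ?_, fun a => ?_⟩
  · have h1 : (c₁ * c₂) * a₃ = c₁ * (c₂ * a₃) := by ring
    have h2 : a₁ + c₁ * a₂ + c₁ * (c₂ * a₃) = a₁ + c₁ * (a₂ + c₂ * a₃) := by ring
    simp only [symbolH_eq, h1, Real.negMulLog_mul (c₁) (a₂),
      Real.negMulLog_mul (c₁) (c₂ * a₃), Real.negMulLog_mul (c₁) (a₂ + c₂ * a₃), h2]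
    ring
  · simp [symbolH_eq]
  · simp [symbolH_eq]
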